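/- Let A be a semi-associative partial *-algebra. Then R(A) is closed under the partial multiplication and is an associative algebra, L(A) is closed under the partial multiplication and is an associative algebra, and M(A) = L(A) ∩ R(A) is a *-algebra (closed under multiplication and under the involution, with associative multiplication). -/
import Mathlib


open scoped ComplexConjugate

/-- A partial *-algebra on a complex vector space `A`.  The partial
multiplication is represented by a total function `mul` together with a
definedness relation `Γ`; the value `mul x y` is meaningful only when
`Γ x y` holds. -/
structure PartialStarAlgebra (A : Type*) [AddCommGroup A] [Module ℂ A] where
  Γ : A → A → Prop
  mul : A → A → A
  inv : A → A
  gamma_add_right : ∀ x y z : A, Γ x y → Γ x z → Γ x (y + z)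
  gamma_smul_right : ∀ (c : ℂ) (x y : A), Γ x y → Γ x (c • y)
  mul_add_right : ∀ x y z : A, Γ x y → Γ x z → mul x (y + z) = mul x y + mul x z
  mul_smul_right : ∀ (c : ℂ) (x y : A), Γ x y → mul x (c • y) = c • mul x y
  inv_add : ∀ x y : A, inv (x + y) = inv x + inv y
  inv_smul : ∀ (c : ℂ) (x : A), inv (c • x) = (starRingEnd ℂ) c • inv x
  inv_inv : ∀ x : A, inv (inv x) = x
  gamma_inv : ∀ x y : A, Γ x y ↔ Γ (inv y) (inv x)
  inv_mul : ∀ x y : A, Γ x y → inv (mul x y) = mul (inv y) (inv x)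

namespace PartialStarAlgebra

variable {A : Type*} [AddCommGroup A] [Module ℂ A] (P : PartialStarAlgebra A)

/-- universal left multipliers `L(A)` -/
def leftMult : Set A := {y | ∀ x, P.Γ y x}

/-- universal right multipliers `R(A)` -/
def rightMult : Set A := {y | ∀ x, P.Γ x y}

/-- universal multipliers `M(A) = L(A) ∩ R(A)` -/
def univMult : Set A := P.leftMult ∩ P.rightMult

/-- the positive cone `A₊` -/
def posCone : Set A :=
  {b | ∃ (n : ℕ) (f : Fin n → A), (∀ j, f j ∈ P.rightMult) ∧
        b = ∑ j, P.mul (P.inv (f j)) (f j)}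

/-- semi-associativity of a partial *-algebra -/
def SemiAssociative : Prop :=
  ∀ x y z : A, P.Γ x y → z ∈ P.rightMult →
    P.Γ x (P.mul y z) ∧ P.mul (P.mul x y) z = P.mul x (P.mul y z)

end PartialStarAlgebra

/-- Remark 2.1.6.  In a semi-associative partial *-algebra,
`R(A)` and `L(A)` are associative algebras (closed under the partial
multiplication, which is associative on them), and `M(A) = L(A) ∩ R(A)` is a
*-algebra (closed under multiplication and the involution, with associative
multiplication). -/
theorem multiplier_algebras {A : Type*} [AddCommGroup A] [Module ℂ A]
    (P : PartialStarAlgebra A) (h : P.SemiAssociative) :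
    (∀ x ∈ P.rightMult, ∀ y ∈ P.rightMult, P.mul x y ∈ P.rightMult) ∧
    (∀ x ∈ P.rightMult, ∀ y ∈ P.rightMult, ∀ z ∈ P.rightMult,
      P.mul (P.mul x y) z = P.mul x (P.mul y z)) ∧
    (∀ x ∈ P.leftMult, ∀ y ∈ P.leftMult, P.mul x y ∈ P.leftMult) ∧
    (∀ x ∈ P.leftMult, ∀ y ∈ P.leftMult, ∀ z ∈ P.leftMult,
      P.mul (P.mul x y) z = P.mul x (P.mul y z)) ∧
    (∀ x ∈ P.univMult, ∀ y ∈ P.univMult, P.mul x y ∈ P.univMult) ∧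
    (∀ x ∈ P.univMult, P.inv x ∈ P.univMult) ∧
    (∀ x ∈ P.univMult, ∀ y ∈ P.univMult, ∀ z ∈ P.univMult,
      P.mul (P.mul x y) z = P.mul x (P.mul y z)) := by
  have hinvinj : Function.Injective P.inv := by
    intro a b hab
    have := congrArg P.inv hab
    rwa [P.inv_inv, P.inv_inv] at this
  have hLR : ∀ x ∈ P.leftMult, P.inv x ∈ P.rightMult := by
    intro x hx w
    have := (P.gamma_inv x (P.inv w)).mp (hx (P.inv w))
    rwa [P.inv_inv] at this
  have hRL : ∀ x ∈ P.rightMult, P.inv x ∈ P.leftMult := by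
    intro x hx w
    have := (P.gamma_inv (P.inv w) x).mp (hx (P.inv w))
    rwa [P.inv_inv] at this
  have hRclos : ∀ x ∈ P.rightMult, ∀ y ∈ P.rightMult, P.mul x y ∈ P.rightMult := by
    intro x hx y hy w
    exact (h w x y (hx w) hy).1
  have hRassoc : ∀ x ∈ P.rightMult, ∀ y ∈ P.rightMult, ∀ z ∈ P.rightMult,
      P.mul (P.mul x y) z = P.mul x (P.mul y z) := by
    intro x _ y hy z hz
    exact (h x y z (hy x) hz).2
  have hLclos : ∀ x ∈ P.leftMult, ∀ y ∈ P.leftMult, P.mul x y ∈ P.leftMult := by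
    intro x hx y hy w
    rw [P.gamma_inv, P.inv_mul x y (hx y)]
    exact (h (P.inv w) (P.inv y) (P.inv x) (hLR y hy (P.inv w)) (hLR x hx)).1
  have hLassoc : ∀ x ∈ P.leftMult, ∀ y ∈ P.leftMult, ∀ z ∈ P.leftMult,
      P.mul (P.mul x y) z = P.mul x (P.mul y z) := by
    intro x hx y hy z hz
    apply hinvinj
    rw [P.inv_mul _ z (hLclos x hx y hy z), P.inv_mul x y (hx y),
        P.inv_mul x _ (hx _), P.inv_mul y z (hy z)]
    exact (hRassoc _ (hLR z hz) _ (hLR y hy) _ (hLR x hx)).symm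
  refine ⟨hRclos, hRassoc, hLclos, hLassoc, ?_, ?_, ?_⟩
  · rintro x ⟨hxl, hxr⟩ y ⟨hyl, hyr⟩
    exact ⟨hLclos x hxl y hyl, hRclos x hxr y hyr⟩
  · rintro x ⟨hxl, hxr⟩
    exact ⟨hRL x hxr, hLR x hxl⟩
  · rintro x ⟨_, hxr⟩ y ⟨_, hyr⟩ z ⟨_, hzr⟩
    exact hRassoc x hxr y hyr z hzr
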